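/- Let Ω ⊆ ℝⁿ be an open bounded set and let u : Ω → ℝ be a bounded continuous function that is locally semiconcave in Ω. Let K ⊂ Ω be a compact set such that u is continuously differentiable on an open neighborhood of K contained in Ω. Then, for ε > 0 small enough, the sup-convolution u^ε is differentiable at every point of K, and ∇u^ε converges to ∇u uniformly on K as ε → 0⁺. -/

import Mathlib

open Set Metric

/-- The sup-convolution `u^ε` of a function `u : Ω → ℝ`. -/
noncomputable def supConv {n : ℕ} (ε : ℝ) (Ω : Set (EuclideanSpace ℝ (Fin n)))
    (u : EuclideanSpace ℝ (Fin n) → ℝ) (x : EuclideanSpace ℝ (Fin n)) : ℝ :=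
  sSup ((fun y => u y - ‖x - y‖ ^ 2 / (2 * ε)) '' Ω)

/-- A function `u` is locally semiconcave on an open set `A` if for every compact `K ⊆ A`
there is a constant `C ≥ 0` such that the semiconcavity inequality holds on every
segment contained in `K`. -/
def LocallySemiconcaveOn {n : ℕ} (A : Set (EuclideanSpace ℝ (Fin n)))
    (u : EuclideanSpace ℝ (Fin n) → ℝ) : Prop :=
  ∀ K : Set (EuclideanSpace ℝ (Fin n)), K ⊆ A → IsCompact K →
    ∃ C : ℝ, 0 ≤ C ∧ ∀ x y : EuclideanSpace ℝ (Fin n), segment ℝ x y ⊆ K →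
      ∀ l : ℝ, l ∈ Set.Icc (0:ℝ) 1 →
        l * u x + (1 - l) * u y - C * (l * (1 - l)) / 2 * ‖x - y‖ ^ 2
          ≤ u (l • x + (1 - l) • y)

/-!
At `x ∈ K` the supremum defining `u^ε x` is attained at some `y` with `‖x - y‖² ≤ 4Mε`, and the
first-order condition at this interior maximizer reads `∇u y = ε⁻¹ (y - x)`. Testing the
supremum at `x'` with `y` bounds `u^ε x' - u^ε x - ⟪∇u y, x' - x⟫` from below by
`-‖x' - x‖²/(2ε)`; semiconcavity of `u` at `y` bounds it from above by `‖x' - x‖²/(2ε)` as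
soon as `εC ≤ 1/2`. So `u^ε` is differentiable at `x` with `∇u^ε x = ∇u y`, and uniform
continuity of `∇u` near `K` turns `‖x - y‖ → 0` into uniform convergence of the gradients.
-/

open Filter Topology
open scoped RealInnerProductSpace

theorem exists_pos_forall_of_eventually_nhdsGT {P : ℝ → Prop} (h : ∀ᶠ ε in 𝓝[>] 0, P ε) :
    ∃ ε₀ > (0:ℝ), ∀ ε : ℝ, 0 < ε → ε < ε₀ → P ε :=
  let ⟨ε₀, hε₀, hsub⟩ := mem_nhdsGT_iff_exists_Ioo_subset.1 h
  ⟨ε₀, hε₀, fun _ h₀ h₁ => hsub ⟨h₀, h₁⟩⟩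

theorem eventually_mul_lt_nhdsGT (a : ℝ) {b : ℝ} (hb : 0 < b) :
    ∀ᶠ ε in 𝓝[>] 0, a * ε < b := by
  refine Filter.Tendsto.eventually_lt_const hb ?_
  simpa using ((continuous_const_mul a).tendsto 0).mono_left nhdsWithin_le_nhds

section InnerProductSpace

variable {F : Type*} [NormedAddCommGroup F] [InnerProductSpace ℝ F]

theorem hasGradientAt_of_abs_sub_sub_inner_le_sq [CompleteSpace F] {f : F → ℝ} {p x : F}
    {c : ℝ} (h : ∀ᶠ x' in 𝓝 x, |f x' - f x - ⟪p, x' - x⟫| ≤ c * ‖x' - x‖ ^ 2) :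
    HasGradientAt f p x := by
  have hsq : (fun x' => ‖x' - x‖ ^ 2) =o[𝓝 x] fun x' => x' - x :=
    (Asymptotics.isLittleO_norm_pow_id one_lt_two).comp_tendsto
      (tendsto_sub_nhds_zero_iff.2 tendsto_id)
  rw [hasGradientAt_iff_isLittleO]
  refine (Asymptotics.IsBigO.of_bound c ?_).trans_isLittleO hsq
  filter_upwards [h] with x' hx'
  simpa only [Real.norm_eq_abs, abs_pow, abs_norm] using hx'

theorem le_add_inner_gradient_add_of_semiconcave [CompleteSpace F] {u : F → ℝ} {C : ℝ}
    (hC : 0 ≤ C) {y y' : F}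
    (hsc : ∀ l ∈ Icc (0:ℝ) 1, l * u y' + (1 - l) * u y - C * (l * (1 - l)) / 2 * ‖y' - y‖ ^ 2
      ≤ u (l • y' + (1 - l) • y))
    (hd : DifferentiableAt ℝ u y) :
    u y' ≤ u y + ⟪gradient u y, y' - y⟫ + C / 2 * ‖y' - y‖ ^ 2 := by
  set v := y' - y
  have hline : HasDerivAt (fun t : ℝ => u (y + t • v)) ⟪gradient u y, v⟫ 0 := by
    have hl : HasDerivAt (fun t : ℝ => y + t • v) v 0 := by
      simpa using ((hasDerivAt_id (0:ℝ)).smul_const v).const_add y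
    rw [inner_gradient_left]
    exact (by simpa using hd.hasFDerivAt : HasFDerivAt u (fderiv ℝ u y) (y + (0:ℝ) • v))
      |>.comp_hasDerivAt 0 hl
  have hslope : ∀ t ∈ Ioc (0:ℝ) 1,
      u y' - u y - C / 2 * ‖v‖ ^ 2 ≤ t⁻¹ • (u (y + (0 + t) • v) - u (y + (0:ℝ) • v)) := by
    intro t ht
    have h := hsc t ⟨ht.1.le, ht.2⟩
    rw [show t • y' + (1 - t) • y = y + t • v by module] at h
    rw [smul_eq_mul, zero_add, zero_smul, add_zero, le_inv_mul_iff₀ ht.1]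
    nlinarith [mul_nonneg (mul_nonneg hC (sq_nonneg t)) (sq_nonneg ‖v‖)]
  have hlim : u y' - u y - C / 2 * ‖v‖ ^ 2 ≤ ⟪gradient u y, v⟫ :=
    ge_of_tendsto hline.tendsto_slope_zero_right
      (Filter.mem_of_superset (Ioc_mem_nhdsGT zero_lt_one) hslope)
  linarith

end InnerProductSpace

section Penalized

variable {F : Type*} [NormedAddCommGroup F] {u : F → ℝ} {Ω : Set F}
  {M ε : ℝ} {x y : F}

theorem exists_isMaxOn_sub_sq_norm_div [ProperSpace F] {R : ℝ} (hε : 0 < ε) (hR : 0 ≤ R)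
    (hRM : 4 * M * ε ≤ R ^ 2) (hB : closedBall x R ⊆ Ω) (hu : ContinuousOn u (closedBall x R))
    (hM : ∀ y ∈ Ω, |u y| ≤ M) :
    ∃ y ∈ closedBall x R, IsMaxOn (fun w => u w - ‖x - w‖ ^ 2 / (2 * ε)) Ω y := by
  have hpen : Continuous fun w : F => ‖x - w‖ ^ 2 / (2 * ε) := by fun_prop
  obtain ⟨y, hy, hmax⟩ := (isCompact_closedBall x R).exists_isMaxOn
    ⟨x, mem_closedBall_self hR⟩ (hu.sub hpen.continuousOn)
  refine ⟨y, hy, fun w hw => ?_⟩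
  by_cases hwB : w ∈ closedBall x R
  · exact hmax hwB
  · -- far from `x` the penalty exceeds the oscillation `2 * M` of `u`
    have hfar : R < ‖x - w‖ := by rwa [mem_closedBall, not_le, dist_comm, dist_eq_norm] at hwB
    have hlarge : 2 * M < ‖x - w‖ ^ 2 / (2 * ε) := by
      rw [lt_div_iff₀ (by positivity)]
      nlinarith
    have hx : u x ≤ u y - ‖x - y‖ ^ 2 / (2 * ε) := by
      simpa using hmax (mem_closedBall_self hR)
    show u w - ‖x - w‖ ^ 2 / (2 * ε) ≤ u y - ‖x - y‖ ^ 2 / (2 * ε)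
    linarith [(abs_le.1 (hM w hw)).2, (abs_le.1 (hM x (hB (mem_closedBall_self hR)))).1]

theorem sq_norm_sub_le_of_isMaxOn (hε : 0 < ε) (hM : ∀ y ∈ Ω, |u y| ≤ M) (hx : x ∈ Ω)
    (hy : y ∈ Ω) (hmax : IsMaxOn (fun w => u w - ‖x - w‖ ^ 2 / (2 * ε)) Ω y) :
    ‖x - y‖ ^ 2 ≤ 4 * M * ε := by
  have hxy : u x ≤ u y - ‖x - y‖ ^ 2 / (2 * ε) := by simpa using hmax hx
  have h : ‖x - y‖ ^ 2 / (2 * ε) ≤ 2 * M := by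
    linarith [(abs_le.1 (hM y hy)).2, (abs_le.1 (hM x hx)).1]
  rw [div_le_iff₀ (by positivity)] at h
  linarith

theorem hasGradientAt_of_isMaxOn_sub_sq_norm_div [InnerProductSpace ℝ F] [CompleteSpace F]
    (hε : ε ≠ 0) (hd : DifferentiableAt ℝ u y) (hΩ : Ω ∈ 𝓝 y)
    (hmax : IsMaxOn (fun w => u w - ‖x - w‖ ^ 2 / (2 * ε)) Ω y) :
    HasGradientAt u (ε⁻¹ • (y - x)) y := by
  have hpen : HasFDerivAt (fun w => ‖x - w‖ ^ 2 / (2 * ε)) (ε⁻¹ • innerSL ℝ (y - x)) y := by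
    have h := (((hasFDerivAt_id y).sub_const x).norm_sq).mul_const (2 * ε)⁻¹
    have hfun : (fun w => ‖x - w‖ ^ 2 / (2 * ε)) = fun w => ‖id w - x‖ ^ 2 * (2 * ε)⁻¹ := by
      funext w; rw [id, norm_sub_rev, div_eq_mul_inv]
    rw [hfun]
    refine h.congr_fderiv ?_
    ext v
    simp [field]
  have h0 := (hmax.isLocalMax hΩ).hasFDerivAt_eq_zero (hd.hasFDerivAt.sub hpen)
  rw [hasGradientAt_iff_hasFDerivAt]
  refine hd.hasFDerivAt.congr_fderiv ?_
  rw [sub_eq_zero.1 h0]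
  ext v
  simp

end Penalized

section SupConv

variable {n : ℕ} {Ω : Set (EuclideanSpace ℝ (Fin n))} {u : EuclideanSpace ℝ (Fin n) → ℝ}
  {C ε : ℝ} {x y : EuclideanSpace ℝ (Fin n)}

theorem supConv_eq_of_isMaxOn (hy : y ∈ Ω)
    (hmax : IsMaxOn (fun w => u w - ‖x - w‖ ^ 2 / (2 * ε)) Ω y) :
    supConv ε Ω u x = u y - ‖x - y‖ ^ 2 / (2 * ε) :=
  IsGreatest.csSup_eq ⟨mem_image_of_mem _ hy, forall_mem_image.2 fun _ hw => hmax hw⟩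

theorem abs_supConv_sub_sub_inner_le {x' y' : EuclideanSpace ℝ (Fin n)} (hε : 0 < ε)
    (hεC : ε * C ≤ 1 / 2)
    (hy : y ∈ Ω) (hmax : IsMaxOn (fun w => u w - ‖x - w‖ ^ 2 / (2 * ε)) Ω y)
    (hy' : y' ∈ Ω) (hmax' : IsMaxOn (fun w => u w - ‖x' - w‖ ^ 2 / (2 * ε)) Ω y')
    (hsupp : u y' ≤ u y + ⟪ε⁻¹ • (y - x), y' - y⟫ + C / 2 * ‖y' - y‖ ^ 2) :
    |supConv ε Ω u x' - supConv ε Ω u x - ⟪ε⁻¹ • (y - x), x' - x⟫|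
      ≤ ‖x' - x‖ ^ 2 / (2 * ε) := by
  have htest : u y - ‖x' - y‖ ^ 2 / (2 * ε) ≤ u y' - ‖x' - y'‖ ^ 2 / (2 * ε) := hmax' hy
  rw [supConv_eq_of_isMaxOn hy hmax, supConv_eq_of_isMaxOn hy' hmax', abs_le]
  have e1 : ‖x' - y‖ ^ 2 = ‖x' - x‖ ^ 2 - 2 * ⟪y - x, x' - x⟫ + ‖y - x‖ ^ 2 := by
    rw [real_inner_comm, ← norm_sub_sq_real, sub_sub_sub_cancel_right]
  have e2 : ‖x' - y'‖ ^ 2 = ‖x' - y‖ ^ 2 - 2 * ⟪x' - y, y' - y⟫ + ‖y' - y‖ ^ 2 := by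
    rw [← norm_sub_sq_real, sub_sub_sub_cancel_right]
  have e3 : ⟪x' - y, y' - y⟫ = ⟪x' - x, y' - y⟫ - ⟪y - x, y' - y⟫ := by
    rw [← inner_sub_left, sub_sub_sub_cancel_right]
  -- `e4` is `‖2 • (x' - x) - (y' - y)‖ ^ 2 ≥ 0`; it absorbs the semiconcavity error
  -- `C / 2 * ‖y' - y‖ ^ 2 ≤ ‖y' - y‖ ^ 2 / (4 * ε)`.
  have e4 : 0 ≤ 4 * ‖x' - x‖ ^ 2 - 4 * ⟪x' - x, y' - y⟫ + ‖y' - y‖ ^ 2 := by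
    have := norm_sub_sq_real ((2:ℝ) • (x' - x)) (y' - y)
    rw [norm_smul, real_inner_smul_left, Real.norm_two] at this
    nlinarith [sq_nonneg ‖(2:ℝ) • (x' - x) - (y' - y)‖]
  rw [real_inner_smul_left] at hsupp
  rw [norm_sub_rev x y, real_inner_smul_left]
  rw [e1] at htest
  constructor
  · field_simp at htest ⊢
    linarith
  · rw [e2, e3, e1]
    field_simp at hsupp ⊢
    linarith [mul_le_mul_of_nonneg_right hεC (sq_nonneg ‖y' - y‖)]

theorem hasGradientAt_supConv {M R : ℝ} (hε : 0 < ε) (hR : 0 < R) (hRM : 4 * M * ε ≤ R ^ 2)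
    (hC : 0 ≤ C) (hεC : ε * C ≤ 1 / 2) (hM : ∀ y ∈ Ω, |u y| ≤ M)
    (hB : ball x (2 * R) ⊆ Ω) (hd : DifferentiableOn ℝ u (ball x (2 * R)))
    (hsc : ∀ y y', segment ℝ y y' ⊆ ball x (2 * R) → ∀ l ∈ Icc (0:ℝ) 1,
      l * u y + (1 - l) * u y' - C * (l * (1 - l)) / 2 * ‖y - y'‖ ^ 2
        ≤ u (l • y + (1 - l) • y')) :
    ∃ y ∈ closedBall x R, ‖x - y‖ ^ 2 ≤ 4 * M * ε ∧
      HasGradientAt (supConv ε Ω u) (gradient u y) x := by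
  have hnear : ∀ x' ∈ ball x R, closedBall x' R ⊆ ball x (2 * R) := fun x' hx' w hw => by
    rw [mem_ball] at hx' ⊢
    linarith [mem_closedBall.1 hw, dist_triangle w x' x]
  have hx : x ∈ ball x R := mem_ball_self hR
  have hmaximizer : ∀ x' ∈ ball x R, ∃ y ∈ closedBall x' R,
      IsMaxOn (fun w => u w - ‖x' - w‖ ^ 2 / (2 * ε)) Ω y := fun x' hx' =>
    exists_isMaxOn_sub_sq_norm_div hε hR.le hRM ((hnear x' hx').trans hB)
      (hd.continuousOn.mono (hnear x' hx')) hM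
  obtain ⟨y, hy, hmax⟩ := hmaximizer x hx
  have hyB : y ∈ ball x (2 * R) := hnear x hx hy
  have hdy : DifferentiableAt ℝ u y := hd.differentiableAt (isOpen_ball.mem_nhds hyB)
  have hgrad : HasGradientAt u (ε⁻¹ • (y - x)) y :=
    hasGradientAt_of_isMaxOn_sub_sq_norm_div hε.ne' hdy
      (Filter.mem_of_superset (isOpen_ball.mem_nhds hyB) hB) hmax
  refine ⟨y, hy, sq_norm_sub_le_of_isMaxOn hε hM (hB (ball_subset_ball (by linarith) hx))
    (hB hyB) hmax, hgrad.gradient ▸ ?_⟩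
  refine hasGradientAt_of_abs_sub_sub_inner_le_sq (c := (2 * ε)⁻¹) ?_
  filter_upwards [isOpen_ball.mem_nhds hx] with x' hx'
  obtain ⟨y', hy', hmax'⟩ := hmaximizer x' hx'
  have hy'B : y' ∈ ball x (2 * R) := hnear x' hx' hy'
  have hsupp := le_add_inner_gradient_add_of_semiconcave hC
    (hsc y' y ((convex_ball x (2 * R)).segment_subset hy'B hyB)) hdy
  rw [hgrad.gradient] at hsupp
  rw [inv_mul_eq_div]
  exact abs_supConv_sub_sub_inner_le hε hεC (hB hyB) hmax (hB hy'B) hmax' hsupp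

theorem eventually_hasGradientAt_supConv {M r : ℝ} {K : Set (EuclideanSpace ℝ (Fin n))}
    (hr : 0 < r) (hC : 0 ≤ C) (hM : ∀ y ∈ Ω, |u y| ≤ M) (hΩ : cthickening r K ⊆ Ω)
    (hd : DifferentiableOn ℝ u (cthickening r K))
    (hsc : ∀ y y', segment ℝ y y' ⊆ cthickening r K → ∀ l ∈ Icc (0:ℝ) 1,
      l * u y + (1 - l) * u y' - C * (l * (1 - l)) / 2 * ‖y - y'‖ ^ 2
        ≤ u (l • y + (1 - l) • y')) :
    ∀ᶠ ε in 𝓝[>] 0, ∀ x ∈ K, ∃ y ∈ cthickening r K,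
      ‖x - y‖ ^ 2 ≤ 4 * M * ε ∧ HasGradientAt (supConv ε Ω u) (gradient u y) x := by
  have hball : ∀ x ∈ K, closedBall x (2 * (r / 2)) ⊆ cthickening r K := fun x hx => by
    rw [mul_div_cancel₀ r two_ne_zero]
    exact closedBall_subset_cthickening hx r
  filter_upwards [self_mem_nhdsWithin, eventually_mul_lt_nhdsGT (4 * M) (pow_pos (half_pos hr) 2),
    eventually_mul_lt_nhdsGT C one_half_pos] with ε hε hRM hεC x hx
  have hB := ball_subset_closedBall.trans (hball x hx)
  obtain ⟨y, hy, hyx, hgrad⟩ := hasGradientAt_supConv hε (half_pos hr) hRM.le hC (by linarith) hM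
    (hB.trans hΩ) (hd.mono hB) (fun y y' hseg => hsc y y' (hseg.trans hB))
  exact ⟨y, hball x hx (closedBall_subset_closedBall (by linarith) hy), hyx, hgrad⟩

end SupConv

theorem supConv_gradient_uniform_convergence_general
    {n : ℕ} (Ω : Set (EuclideanSpace ℝ (Fin n)))
    (u : EuclideanSpace ℝ (Fin n) → ℝ)
    (hubdd : ∃ M : ℝ, ∀ y ∈ Ω, |u y| ≤ M)
    (hsc : LocallySemiconcaveOn Ω u)
    (K : Set (EuclideanSpace ℝ (Fin n))) (hK : IsCompact K)
    (V : Set (EuclideanSpace ℝ (Fin n))) (hVopen : IsOpen V)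
    (hKV : K ⊆ V) (hVΩ : V ⊆ Ω) (huC1 : ContDiffOn ℝ 1 u V) :
    (∃ ε₀ > (0:ℝ), ∀ ε : ℝ, 0 < ε → ε < ε₀ → ∀ x ∈ K,
        DifferentiableAt ℝ (supConv ε Ω u) x) ∧
    (∀ δ > (0:ℝ), ∃ ε₁ > (0:ℝ), ∀ ε : ℝ, 0 < ε → ε < ε₁ → ∀ x ∈ K,
        ‖gradient (supConv ε Ω u) x - gradient u x‖ < δ) := by
  obtain ⟨M, hM⟩ := hubdd
  obtain ⟨r, hr, hrV⟩ := hK.exists_cthickening_subset_open hVopen hKV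
  have hL : IsCompact (cthickening r K) := hK.cthickening
  obtain ⟨C, hC, hCsc⟩ := hsc _ (hrV.trans hVΩ) hL
  have hsupConv := eventually_hasGradientAt_supConv hr hC hM (hrV.trans hVΩ)
    ((huC1.differentiableOn one_ne_zero).mono hrV) hCsc
  refine ⟨exists_pos_forall_of_eventually_nhdsGT (hsupConv.mono fun ε hε x hx => ?_),
    fun δ hδ => ?_⟩
  · obtain ⟨y, -, -, hgrad⟩ := hε x hx
    exact hgrad.differentiableAt
  have hgc : ContinuousOn (gradient u) V :=
    (InnerProductSpace.toDual ℝ _).symm.continuous.comp_continuousOn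
      (huC1.continuousOn_fderiv_of_isOpen hVopen le_rfl)
  obtain ⟨η, hη, hUC⟩ := Metric.uniformContinuousOn_iff.1
    (hL.uniformContinuousOn_of_continuous (hgc.mono hrV)) δ hδ
  refine exists_pos_forall_of_eventually_nhdsGT ?_
  filter_upwards [hsupConv, eventually_mul_lt_nhdsGT (4 * M) (pow_pos hη 2)] with ε hε hsmall x hx
  obtain ⟨y, hy, hyx, hgrad⟩ := hε x hx
  rw [hgrad.gradient, ← dist_eq_norm, dist_comm]
  refine hUC x (self_subset_cthickening K hx) y hy ?_
  rw [dist_eq_norm]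
  exact lt_of_pow_lt_pow_left₀ 2 hη.le (hyx.trans_lt hsmall)

theorem supConv_gradient_uniform_convergence
    {n : ℕ} (Ω : Set (EuclideanSpace ℝ (Fin n)))
    (hΩopen : IsOpen Ω) (hΩbdd : Bornology.IsBounded Ω)
    (u : EuclideanSpace ℝ (Fin n) → ℝ)
    (hu : ContinuousOn u Ω) (hubdd : ∃ M : ℝ, ∀ y ∈ Ω, |u y| ≤ M)
    (hsc : LocallySemiconcaveOn Ω u)
    (K : Set (EuclideanSpace ℝ (Fin n))) (hK : IsCompact K)
    (V : Set (EuclideanSpace ℝ (Fin n))) (hVopen : IsOpen V)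
    (hKV : K ⊆ V) (hVΩ : V ⊆ Ω) (huC1 : ContDiffOn ℝ 1 u V) :
    (∃ ε₀ > (0:ℝ), ∀ ε : ℝ, 0 < ε → ε < ε₀ → ∀ x ∈ K,
        DifferentiableAt ℝ (supConv ε Ω u) x) ∧
    (∀ δ > (0:ℝ), ∃ ε₁ > (0:ℝ), ∀ ε : ℝ, 0 < ε → ε < ε₁ → ∀ x ∈ K,
        ‖gradient (supConv ε Ω u) x - gradient u x‖ < δ) :=
  supConv_gradient_uniform_convergence_general Ω u hubdd hsc K hK V hVopen hKV hVΩ huC1
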